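/- arXiv:1612.07925 — 3 statements merged into one kernel-verified Lean document; each statement's English description precedes it below -/
import Mathlib

section
/- Let δ = √(8/3). If s points x_1,...,x_s in ℝ^ℓ satisfy ‖x_i − x_{i'}‖ > δ·α for all i ≠ i' (α > 0), and there is a point j ∈ ℝ^ℓ with ‖j − x_i‖ < α for all i, then s ≤ 3. -/
/-!
For points `x i` of a real inner product space and any centre `j`, the pairwise squared distances
satisfy `∑ i, ∑ i', ‖x i - x i'‖² ≤ 2 s ∑ i, ‖j - x i‖²`, with equality when `j` is the centroid.
If the points are `δα`-separated and lie within `α` of `j`, this gives `s (s - 1) δ² α² < 2 s² α²`,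
i.e. `(s - 1) δ² < 2 s`; for `δ² = 8/3` this says `s < 4`.
-/

open Finset

section PairwiseDistances

variable {ι E : Type*} [Fintype ι] [NormedAddCommGroup E]

theorem card_mul_card_sub_one_mul_sq_le_sum_sum {x : ι → E} {r : ℝ} (hr : 0 ≤ r)
    (hsep : Pairwise fun i i' => r < ‖x i - x i'‖) :
    Fintype.card ι * (Fintype.card ι - 1) * r ^ 2 ≤ ∑ i, ∑ i', ‖x i - x i'‖ ^ 2 := by
  classical
  have hterm (i i' : ι) : r ^ 2 - (if i = i' then r ^ 2 else 0) ≤ ‖x i - x i'‖ ^ 2 := by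
    by_cases h : i = i'
    · simp [h]
    · simpa [h] using pow_le_pow_left₀ hr (hsep h).le 2
  calc (Fintype.card ι : ℝ) * (Fintype.card ι - 1) * r ^ 2
      = ∑ i, ∑ i', (r ^ 2 - if i = i' then r ^ 2 else 0) := by
        simp only [sum_sub_distrib, sum_ite_eq, mem_univ, if_true, sum_const, card_univ,
          nsmul_eq_mul]
        ring
    _ ≤ ∑ i, ∑ i', ‖x i - x i'‖ ^ 2 := sum_le_sum fun i _ => sum_le_sum fun i' _ => hterm i i'

variable [InnerProductSpace ℝ E]

theorem sum_sum_norm_sub_sq (v : ι → E) :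
    ∑ i, ∑ i', ‖v i - v i'‖ ^ 2
      = 2 * Fintype.card ι * ∑ i, ‖v i‖ ^ 2 - 2 * ‖∑ i, v i‖ ^ 2 := by
  simp only [norm_sub_sq_real, sum_add_distrib, sum_sub_distrib, ← mul_sum, ← inner_sum,
    ← sum_inner, sum_const, card_univ, nsmul_eq_mul, real_inner_self_eq_norm_sq]
  ring

theorem sum_sum_norm_sub_sq_le (x : ι → E) (j : E) :
    ∑ i, ∑ i', ‖x i - x i'‖ ^ 2 ≤ 2 * Fintype.card ι * ∑ i, ‖j - x i‖ ^ 2 := by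
  have h := sum_sum_norm_sub_sq fun i => x i - j
  simp only [sub_sub_sub_cancel_right, norm_sub_rev (x _) j] at h
  rw [h]
  linarith [sq_nonneg ‖∑ i, (x i - j)‖]

theorem card_sub_one_mul_sq_lt_two_mul_card [Nonempty ι] {x : ι → E} {j : E} {α δ : ℝ}
    (hδ : 0 ≤ δ) (hsep : Pairwise fun i i' => δ * α < ‖x i - x i'‖)
    (hclose : ∀ i, ‖j - x i‖ < α) :
    (Fintype.card ι - 1) * δ ^ 2 < 2 * Fintype.card ι := by
  obtain ⟨i₀⟩ := ‹Nonempty ι›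
  have hα : 0 < α := (norm_nonneg _).trans_lt (hclose i₀)
  have hcard : (0 : ℝ) < Fintype.card ι := by exact_mod_cast Fintype.card_pos
  have hsum : ∑ i, ‖j - x i‖ ^ 2 < Fintype.card ι * α ^ 2 := by
    calc ∑ i, ‖j - x i‖ ^ 2 < ∑ _i : ι, α ^ 2 :=
          sum_lt_sum_of_nonempty univ_nonempty fun i _ =>
            pow_lt_pow_left₀ (hclose i) (norm_nonneg _) two_ne_zero
      _ = Fintype.card ι * α ^ 2 := by simp
  have hchain : Fintype.card ι * α ^ 2 * ((Fintype.card ι - 1) * δ ^ 2)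
      < Fintype.card ι * α ^ 2 * (2 * Fintype.card ι) := by
    calc Fintype.card ι * α ^ 2 * ((Fintype.card ι - 1) * δ ^ 2)
        = Fintype.card ι * (Fintype.card ι - 1) * (δ * α) ^ 2 := by ring
      _ ≤ ∑ i, ∑ i', ‖x i - x i'‖ ^ 2 :=
          card_mul_card_sub_one_mul_sq_le_sum_sum (by positivity) hsep
      _ ≤ 2 * Fintype.card ι * ∑ i, ‖j - x i‖ ^ 2 := sum_sum_norm_sub_sq_le x j
      _ < 2 * Fintype.card ι * (Fintype.card ι * α ^ 2) := by gcongr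
      _ = Fintype.card ι * α ^ 2 * (2 * Fintype.card ι) := by ring
  exact lt_of_mul_lt_mul_left hchain (by positivity)

end PairwiseDistances

theorem kmedian_at_most_three_general (ℓ s : ℕ) (α : ℝ)
    (x : Fin s → EuclideanSpace ℝ (Fin ℓ)) (j : EuclideanSpace ℝ (Fin ℓ))
    (hsep : ∀ i i' : Fin s, i ≠ i' → Real.sqrt (8 / 3) * α < ‖x i - x i'‖)
    (hclose : ∀ i, ‖j - x i‖ < α) :
    s ≤ 3 := by
  by_contra! hs
  have : Nonempty (Fin s) := ⟨⟨0, by omega⟩⟩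
  have h := card_sub_one_mul_sq_lt_two_mul_card (Real.sqrt_nonneg (8 / 3))
    (fun i i' => hsep i i') hclose
  rw [Real.sq_sqrt (by norm_num), Fintype.card_fin] at h
  have hs' : (4 : ℝ) ≤ s := by exact_mod_cast hs
  linarith

theorem kmedian_at_most_three (ℓ s : ℕ) (α : ℝ) (hα : 0 < α)
    (x : Fin s → EuclideanSpace ℝ (Fin ℓ)) (j : EuclideanSpace ℝ (Fin ℓ))
    (hsep : ∀ i i' : Fin s, i ≠ i' → Real.sqrt (8 / 3) * α < ‖x i - x i'‖)
    (hclose : ∀ i, ‖j - x i‖ < α) :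
    s ≤ 3 :=
  kmedian_at_most_three_general ℓ s α x j hsep hclose
end

section
/- Define a 'stops' relation on a finite set D of points in a metric space equipped with values α : D → ℝ_{≥0} with all α_j ≥ 0, by: j' stops j iff 2√(α_j) ≥ d(j,j') + 6√(α_{j'}). If j is stopped by some client, then j is stopped by some client j' that is itself not stopped by any client. -/
theorem stopped_by_unstopped {X : Type*} [MetricSpace X]
    (D : Finset X) (α : X → ℝ) (hα : ∀ j ∈ D, 0 ≤ α j)
    (stops : X → X → Prop)
    (hstops : ∀ j' j, stops j' j ↔
      j' ∈ D ∧ j ∈ D ∧ j' ≠ j ∧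
        dist j j' + 6 * Real.sqrt (α j') ≤ 2 * Real.sqrt (α j))
    (j : X) (hj : j ∈ D) (h : ∃ j', stops j' j) :
    ∃ j', stops j' j ∧ ∀ j'', ¬ stops j'' j' := by
  classical
  set S : Finset X := D.filter (fun x => stops x j) with hS
  obtain ⟨j0, hj0⟩ := h
  have hj0S : j0 ∈ S := by
    rw [hS, Finset.mem_filter]
    exact ⟨((hstops j0 j).mp hj0).1, hj0⟩
  obtain ⟨j', hj'S, hmin⟩ := S.exists_min_image α ⟨j0, hj0S⟩
  rw [hS, Finset.mem_filter] at hj'S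
  refine ⟨j', hj'S.2, fun j'' hst => ?_⟩
  obtain ⟨hj''D, hj'D, hne, hineq⟩ := (hstops j'' j').mp hst
  obtain ⟨_, _, hne', hineq'⟩ := (hstops j' j).mp hj'S.2
  have hd : 0 < dist j' j'' := dist_pos.mpr (Ne.symm hne)
  have h6 : 6 * Real.sqrt (α j'') < 2 * Real.sqrt (α j') := by linarith
  have hs : Real.sqrt (α j'') < Real.sqrt (α j') := by
    nlinarith [Real.sqrt_nonneg (α j''), Real.sqrt_nonneg (α j')]
  have hαlt : α j'' < α j' := by
    by_contra hle
    exact absurd (Real.sqrt_le_sqrt (not_lt.mp hle)) (not_le.mpr hs)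
  -- case j'' = j would give a contradiction
  by_cases hjj : j'' = j
  · subst hjj
    rw [dist_comm j'' j'] at hineq'
    have hnn : 0 ≤ Real.sqrt (α j'') := Real.sqrt_nonneg _
    have hnn' : 0 ≤ Real.sqrt (α j') := Real.sqrt_nonneg _
    linarith
  · -- j'' stops j, contradicting minimality
    have hstj : stops j'' j := by
      rw [hstops]
      refine ⟨hj''D, hj, hjj, ?_⟩
      have htri : dist j j'' ≤ dist j j' + dist j' j'' := dist_triangle _ _ _
      have hnn' : 0 ≤ Real.sqrt (α j') := Real.sqrt_nonneg _
      linarith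
    have : j'' ∈ S := by
      rw [hS, Finset.mem_filter]; exact ⟨hj''D, hstj⟩
    exact absurd (hmin j'' this) (not_le.mpr hαlt)
end

section
/- Suppose j' stops j and j' has a witness facility i satisfying d(j',i) + √(δ·t_i) ≤ (1 + (1+ε)√δ)·√(α_{j'}) with 1 ≤ √δ ≤ 2 and 0 < ε ≤ 1. Then d(j,i) + √(δ·t_i) ≤ (1 + √δ)·√(α_j). -/
theorem stopped_client_witness_bound {X : Type*} [MetricSpace X]
    (j j' i : X) (δ t αj αj' ε : ℝ)
    (ht : 0 ≤ t) (hαj : 0 ≤ αj) (hαj' : 0 ≤ αj')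
    (hδ1 : 1 ≤ Real.sqrt δ) (hδ2 : Real.sqrt δ ≤ 2)
    (hε0 : 0 < ε) (hε1 : ε ≤ 1)
    (hstop : dist j j' + 6 * Real.sqrt αj' ≤ 2 * Real.sqrt αj)
    (hwit : dist j' i + Real.sqrt (δ * t)
      ≤ (1 + (1 + ε) * Real.sqrt δ) * Real.sqrt αj') :
    dist j i + Real.sqrt (δ * t) ≤ (1 + Real.sqrt δ) * Real.sqrt αj := by
  have htri := dist_triangle j j' i
  have h1 := Real.sqrt_nonneg αj
  have h2 := Real.sqrt_nonneg αj'
  nlinarith [mul_nonneg h1 (sub_nonneg.2 hδ1), mul_nonneg h2 (sub_nonneg.2 hδ2),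
    mul_nonneg (mul_nonneg h2 hε0.le) (sub_nonneg.2 hδ2),
    mul_nonneg h2 (sub_nonneg.2 hε1)]
end
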